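/- Suppose that for every probability distribution μ on subsets of [n] with max_i P_{A∼μ}[i ∈ A] ≤ p, two i.i.d. samples A, B from μ satisfy H(A ∪ B) ≥ c·H(A) for some constant c > 1. Then every union-closed family F ⊆ 2^[n] with |F| ≥ 2 has an element contained in more than a p-fraction of its sets. -/

import Mathlib

/-- Base-2 Shannon entropy of a distribution `μ` on a finite type. -/
noncomputable def ent {α : Type*} [Fintype α] (μ : α → ℝ) : ℝ :=
  ∑ x, -(μ x * Real.logb 2 (μ x))

/-- Distribution of `A ∪ B` for `A, B` i.i.d. with distribution `μ` on subsets of `[n]`. -/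
noncomputable def unionPush (n : ℕ) (μ : Finset (Fin n) → ℝ) (S : Finset (Fin n)) : ℝ :=
  ∑ T : Finset (Fin n), ∑ U : Finset (Fin n), if T ∪ U = S then μ T * μ U else 0

/-!
Apply the hypothesis to the uniform distribution on `F`. If no element lies in more than a
`p`-fraction of the sets of `F`, every marginal of this distribution is at most `p`, so
`H(A ∪ B) ≥ c · log₂ |F|`. But `F` is union-closed, so `A ∪ B` is supported on `F` and
`H(A ∪ B) ≤ log₂ |F|`; as `|F| ≥ 2` makes `log₂ |F| > 0`, this contradicts `c > 1`.
-/

open Finset Real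

section Entropy

variable {α : Type*} [Fintype α]

lemma ent_eq_sum_negMulLog_div_log_two (μ : α → ℝ) :
    ent μ = (∑ x, negMulLog (μ x)) / log 2 := by
  simp only [ent, sum_div, negMulLog, logb]
  congr 1 with x
  ring

/-- Jensen for the concave `negMulLog`, with weights `1 / #s` at the points `#s * ν x`. -/
lemma sum_negMulLog_le_log_card {ι : Type*} (s : Finset ι) {ν : ι → ℝ}
    (hν : ∀ x ∈ s, 0 ≤ ν x) (hsum : ∑ x ∈ s, ν x = 1) :
    ∑ x ∈ s, negMulLog (ν x) ≤ log #s := by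
  have hs : s.Nonempty := nonempty_of_sum_ne_zero (by rw [hsum]; exact one_ne_zero)
  have hN : (0 : ℝ) < #s := by exact_mod_cast hs.card_pos
  have hjensen : ∑ x ∈ s, (#s : ℝ)⁻¹ • negMulLog (#s * ν x)
      ≤ negMulLog (∑ x ∈ s, (#s : ℝ)⁻¹ • (#s * ν x)) :=
    concaveOn_negMulLog.le_map_sum (fun _ _ => by positivity)
      (by simp [hN.ne'])
      (fun x hx => Set.mem_Ici.mpr (mul_nonneg hN.le (hν x hx)))
  have hpoint : ∀ x ∈ s, (#s : ℝ)⁻¹ * negMulLog (#s * ν x)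
      = negMulLog (ν x) - ν x * log #s := by
    intro x _
    rw [negMulLog_mul, negMulLog]
    field_simp
    ring
  simp only [smul_eq_mul, ← mul_assoc, inv_mul_cancel₀ hN.ne', one_mul, hsum,
    negMulLog_one] at hjensen
  rw [sum_congr rfl hpoint, sum_sub_distrib,
    ← sum_mul, hsum] at hjensen
  linarith

lemma ent_le_logb_card {ν : α → ℝ} (s : Finset α) (hν : ∀ x, 0 ≤ ν x)
    (hsum : ∑ x, ν x = 1) (hsupp : ∀ x ∉ s, ν x = 0) :
    ent ν ≤ logb 2 #s := by
  have hsum_s : ∑ x ∈ s, ν x = 1 := by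
    rw [← hsum]
    exact sum_subset (subset_univ s) fun x _ hx => hsupp x hx
  have hrestrict : ∑ x, negMulLog (ν x) = ∑ x ∈ s, negMulLog (ν x) :=
    (sum_subset (subset_univ s) fun x _ hx => by rw [hsupp x hx, negMulLog_zero]).symm
  rw [ent_eq_sum_negMulLog_div_log_two, hrestrict, logb]
  exact div_le_div_of_nonneg_right (sum_negMulLog_le_log_card s (fun x _ => hν x) hsum_s)
    (log_nonneg one_le_two)

end Entropy

section Uniform

variable {α : Type*} [DecidableEq α]

noncomputable def uniformOn (s : Finset α) (x : α) : ℝ :=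
  if x ∈ s then (#s : ℝ)⁻¹ else 0

lemma uniformOn_nonneg (s : Finset α) (x : α) : 0 ≤ uniformOn s x := by
  unfold uniformOn
  split_ifs <;> positivity

lemma uniformOn_eq_zero {s : Finset α} {x : α} (hx : x ∉ s) : uniformOn s x = 0 :=
  if_neg hx

lemma sum_uniformOn (s t : Finset α) :
    ∑ x ∈ t, uniformOn s x = #(t ∩ s) / #s := by
  simp [uniformOn, div_eq_mul_inv]

lemma sum_univ_uniformOn [Fintype α] {s : Finset α} (hs : s.Nonempty) :
    ∑ x, uniformOn s x = 1 := by
  rw [sum_uniformOn, univ_inter, div_self (by exact_mod_cast hs.card_pos.ne')]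

lemma ent_uniformOn [Fintype α] (s : Finset α) : ent (uniformOn s) = logb 2 #s := by
  have hterm : ∀ x, -(uniformOn s x * logb 2 (uniformOn s x))
      = if x ∈ s then (#s : ℝ)⁻¹ * logb 2 #s else 0 := by
    intro x
    unfold uniformOn
    split_ifs
    · rw [logb_inv]; ring
    · simp
  rcases s.eq_empty_or_nonempty with rfl | hs
  · simp [ent, uniformOn]
  simp only [ent, hterm, sum_ite_mem, univ_inter, sum_const, nsmul_eq_mul]
  field_simp [hs.card_pos.ne']

end Uniform

section UnionPush

variable {n : ℕ} {μ : Finset (Fin n) → ℝ}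

lemma unionPush_nonneg (hμ : ∀ S, 0 ≤ μ S) (S : Finset (Fin n)) : 0 ≤ unionPush n μ S :=
  sum_nonneg fun T _ => sum_nonneg fun U _ => by
    split_ifs
    exacts [mul_nonneg (hμ T) (hμ U), le_rfl]

lemma sum_unionPush : ∑ S, unionPush n μ S = (∑ S, μ S) ^ 2 := by
  rw [sq, sum_mul_sum]
  unfold unionPush
  rw [sum_comm]
  refine sum_congr rfl fun T _ => ?_
  rw [sum_comm]
  simp

lemma unionPush_eq_zero_of_notMem {F : Finset (Finset (Fin n))}
    (hF : ∀ A ∈ F, ∀ B ∈ F, A ∪ B ∈ F) (hμ : ∀ S ∉ F, μ S = 0) {S : Finset (Fin n)}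
    (hS : S ∉ F) : unionPush n μ S = 0 := by
  refine sum_eq_zero fun T _ => sum_eq_zero fun U _ => ?_
  split_ifs with hTU
  · by_cases hT : T ∈ F
    · by_cases hU : U ∈ F
      · exact absurd (hTU ▸ hF T hT U hU) hS
      · rw [hμ U hU, mul_zero]
    · rw [hμ T hT, zero_mul]
  · rfl

end UnionPush

/-- Suppose that for every probability distribution `μ` on subsets of `[n]` with
`max_i P[i ∈ A] ≤ p`, two i.i.d. samples `A, B ∼ μ` satisfy `H(A ∪ B) ≥ c·H(A)` with
`c > 1`. Then every union-closed family `F` with `|F| ≥ 2` has an element contained in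
more than a `p`-fraction of its sets. -/
theorem stmt17 (n : ℕ) (p c : ℝ) (hc : 1 < c)
    (h : ∀ μ : Finset (Fin n) → ℝ, (∀ S, 0 ≤ μ S) → (∑ S, μ S) = 1 →
      (∀ i : Fin n, (∑ S ∈ Finset.univ.filter (fun S : Finset (Fin n) => i ∈ S), μ S) ≤ p) →
      c * ent μ ≤ ent (unionPush n μ)) :
    ∀ F : Finset (Finset (Fin n)), (∀ A ∈ F, ∀ B ∈ F, A ∪ B ∈ F) → 2 ≤ F.card →
      ∃ i : Fin n, p * (F.card : ℝ) < ((F.filter (fun S => i ∈ S)).card : ℝ) := by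
  intro F hF hcard
  by_contra! hsparse
  have hFpos : (0 : ℝ) < #F := by exact_mod_cast (by omega : 0 < #F)
  have hmass : ∑ S, uniformOn F S = 1 := sum_univ_uniformOn (card_pos.mp (by omega))
  have hmarginal : ∀ i : Fin n, ∑ S ∈ univ.filter (i ∈ ·), uniformOn F S ≤ p := by
    intro i
    rw [sum_uniformOn, div_le_iff₀ hFpos, filter_inter, univ_inter]
    exact hsparse i
  have hgrowth := h (uniformOn F) (uniformOn_nonneg F) hmass hmarginal
  have hunion : ent (unionPush n (uniformOn F)) ≤ logb 2 #F :=
    ent_le_logb_card F (unionPush_nonneg (uniformOn_nonneg F))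
      (by rw [sum_unionPush, hmass, one_pow])
      fun S hS => unionPush_eq_zero_of_notMem hF (fun _ => uniformOn_eq_zero) hS
  have hlog : 0 < logb 2 #F := logb_pos one_lt_two (by exact_mod_cast hcard)
  rw [ent_uniformOn] at hgrowth
  nlinarith
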